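/- For all integers g ≥ 3 and d ≥ 2, the inequality 1 + Σ_{n=1}^{g} C(g, n) · Σ_{q=0}^{d-1} 2^q · C(q + n − 1, n − 1) > 2^d (g d + 1) holds, where C(a, b) denotes the binomial coefficient. -/

import Mathlib

open Ideal IsLocalRing Finset

/-- The length of the `R`-module `M`, as the Krull dimension of its submodule lattice. -/
noncomputable def moduleLength (R M : Type*) [CommRing R] [AddCommGroup M] [Module R M] : ℕ∞ :=
  (Order.krullDim (Submodule R M)).unbotD 0

/-- The length `ℓ_R(R/I)` as a natural number. -/
noncomputable def colength {R : Type*} [CommRing R] (I : Ideal R) : ℕ :=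
  (moduleLength R (R ⧸ I)).toNat

/-- The length `ℓ_R(J/(J ∩ K))` as a natural number; for `K ≤ J` this is `ℓ(J/K)`. -/
noncomputable def quotLength {R : Type*} [CommRing R] (J K : Ideal R) : ℕ :=
  (moduleLength R (J ⧸ (Submodule.comap J.subtype K))).toNat

/-- The minimal number of generators of an ideal. -/
noncomputable def minGens {R : Type*} [CommRing R] (I : Ideal R) : ℕ :=
  sInf {n : ℕ | ∃ s : Finset R, s.card = n ∧ Ideal.span (s : Set R) = I}

/-- `I` is an `m`-primary ideal: `I ≤ m` and some power of `m` is contained in `I`. -/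
def IsMPrimary {R : Type*} [CommRing R] (m I : Ideal R) : Prop :=
  I ≤ m ∧ ∃ k : ℕ, m ^ k ≤ I

/-- `e` is the Hilbert–Samuel multiplicity of the ideal `I` in a `d`-dimensional ring:
`ℓ(R/Iⁿ)` agrees with a polynomial `p` for large `n` and `e = d! ·(coefficient of nᵈ in p)`. -/
def IsHSMultiplicity {R : Type*} [CommRing R] (I : Ideal R) (d : ℕ) (e : ℕ) : Prop :=
  ∃ p : Polynomial ℚ,
    (∃ N : ℕ, ∀ n : ℕ, N ≤ n → (colength (I ^ n) : ℚ) = p.eval (n : ℚ)) ∧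
    (e : ℚ) = d.factorial * p.coeff d

/-- `e` is the mixed multiplicity `e(I₀^{[q₀+1]} | I₁^{[q₁]} | ⋯ | I_{g-1}^{[q_{g-1}]})` of the
ideals `I₀, …, I_{g-1}`: the normalized coefficient of `∏ rⱼ^{qⱼ}` in the polynomial agreeing
with `ℓ(I₀^{r₀}⋯I_{g-1}^{r_{g-1}} / I₀^{r₀+1} I₁^{r₁}⋯I_{g-1}^{r_{g-1}})` for large `r`. -/
def IsMixedMultiplicity {R : Type*} [CommRing R] {g : ℕ} (I : Fin g → Ideal R)
    (q : Fin g → ℕ) (e : ℕ) : Prop :=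
  ∃ P : MvPolynomial (Fin g) ℚ,
    (∃ N : ℕ, ∀ r : Fin g → ℕ, (∀ j, N ≤ r j) →
      (quotLength (∏ j, I j ^ r j) (∏ j, I j ^ (r j + if (j : ℕ) = 0 then 1 else 0)) : ℚ)
        = MvPolynomial.eval (fun j => (r j : ℚ)) P) ∧
    (e : ℚ) = (∏ j, (q j).factorial : ℕ) * MvPolynomial.coeff (Finsupp.equivFunOnFinite.symm q) P

/-- Generators of the multi-graded extended Rees algebra inside the Laurent polynomial ring
`R[t₁, t₁⁻¹, …, t_g, t_g⁻¹] = AddMonoidAlgebra R (Fin g → ℤ)`: the inverse variables `tⱼ⁻¹`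
and the elements `a tⱼ` for `a ∈ Iⱼ`. -/
noncomputable def reesGens {R : Type*} [CommRing R] {g : ℕ} (I : Fin g → Ideal R) :
    Set (AddMonoidAlgebra R (Fin g → ℤ)) :=
  (⋃ j : Fin g, {AddMonoidAlgebra.single (-(Pi.single j 1)) (1 : R)}) ∪
  (⋃ j : Fin g, (fun a : R => AddMonoidAlgebra.single (Pi.single j 1 : Fin g → ℤ) a) '' (I j : Set R))

/-- The multi-graded extended Rees algebra `B(I) = R[I₁t₁, …, I_g t_g, t₁⁻¹, …, t_g⁻¹]`. -/
noncomputable def extendedRees {R : Type*} [CommRing R] {g : ℕ} (I : Fin g → Ideal R) :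
    Subalgebra R (AddMonoidAlgebra R (Fin g → ℤ)) :=
  Algebra.adjoin R (reesGens I)

/-- The maximal homogeneous ideal `N = (t₁⁻¹, …, t_g⁻¹, m, I₁t₁, …, I_g t_g)` of the
multi-graded extended Rees algebra. -/
noncomputable def maxHomIdeal {R : Type*} [CommRing R] {g : ℕ} (m : Ideal R)
    (I : Fin g → Ideal R) : Ideal (extendedRees I) :=
  Ideal.span { x : extendedRees I | (x : AddMonoidAlgebra R (Fin g → ℤ)) ∈
    reesGens I ∪ (fun a : R => algebraMap R (AddMonoidAlgebra R (Fin g → ℤ)) a) '' (m : Set R) }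

/-- A ring `A` with distinguished (maximal) ideal `m` is Cohen–Macaulay if there is a regular
sequence contained in `m` whose length is the Krull dimension of `A` (depth = dimension). -/
def IsCohenMacaulayLocal (A : Type*) [CommRing A] (m : Ideal A) : Prop :=
  ∃ rs : List A, (∀ x ∈ rs, x ∈ m) ∧ RingTheory.Sequence.IsRegular A rs ∧
    (rs.length : WithBot ℕ∞) = ringKrullDim A

/-- The localization of `B` at the (prime) ideal `N` is Cohen–Macaulay, and
`e(N) = μ(N) - D + 1` where `D = dim B`; i.e. `B_N` is CM with minimal multiplicity. -/
def CMWithMinMultAt {B : Type*} [CommRing B] (N : Ideal B) (D : ℕ) : Prop :=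
  (∀ hp : N.IsPrime,
    letI := hp
    IsCohenMacaulayLocal (Localization.AtPrime N)
      (IsLocalRing.maximalIdeal (Localization.AtPrime N))) ∧
  ∃ e : ℕ, IsHSMultiplicity N D e ∧ e + D = minGens N + 1

/-- A local ring with maximal ideal `m` is regular if `m` is generated by `dim R` elements. -/
def IsRegularLocalWith (R : Type*) [CommRing R] (m : Ideal R) : Prop :=
  (minGens m : WithBot ℕ∞) = ringKrullDim R

/-- `J` is a reduction of `I`. -/
def IsReduction {R : Type*} [CommRing R] (J I : Ideal R) : Prop :=
  J ≤ I ∧ ∃ n : ℕ, J * I ^ n = I ^ (n + 1)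

/-- `J` is a minimal reduction of `I`. -/
def IsMinimalReduction {R : Type*} [CommRing R] (J I : Ideal R) : Prop :=
  IsReduction J I ∧ ∀ K : Ideal R, IsReduction K I → K ≤ J → K = J

/-- The reduction number `r(I)`. -/
noncomputable def reductionNumber {R : Type*} [CommRing R] (I : Ideal R) : ℕ :=
  sInf { n : ℕ | ∃ J : Ideal R, IsMinimalReduction J I ∧ J * I ^ n = I ^ (n + 1) }

/-- `x₁, …, x_g` is a joint reduction of the ideals `I₁, …, I_g`. -/
def IsJointReduction {R : Type*} [CommRing R] {g : ℕ} (I : Fin g → Ideal R)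
    (x : Fin g → R) : Prop :=
  (∀ j, x j ∈ I j) ∧
  IsReduction (∑ j, Ideal.span {x j} * ∏ k ∈ Finset.univ.erase j, I k) (∏ j, I j)

/-- A local ring with maximal ideal `m` is quasi-unmixed if its `m`-adic completion is
equidimensional. -/
def IsQuasiUnmixed (R : Type*) [CommRing R] (m : Ideal R) : Prop :=
  ∀ p ∈ minimalPrimes (AdicCompletion m R),
    ringKrullDim ((AdicCompletion m R) ⧸ p) = ringKrullDim (AdicCompletion m R)

/-! Only the terms `n = 1, 2, 3` are needed. The inner sums are `2^d - 1` for `n = 1` and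
`(d - 1) 2^d + 1` for `n = 2`, and they increase with `n`; with `C(g,2) ≥ g` and `C(g,3) ≥ 1`
the right-hand side is at least `g d 2^d + (d - 1) 2^d + 2`, which exceeds `2^d (g d + 1)`
as soon as `d ≥ 2`. -/

lemma sum_range_two_pow_add_one (d : ℕ) : ∑ q ∈ range d, 2 ^ q + 1 = 2 ^ d := by
  simpa [one_add_one_eq_two] using geom_sum_mul_add (1 : ℕ) d

lemma sum_range_two_pow_mul_succ_add (d : ℕ) :
    ∑ q ∈ range d, 2 ^ q * (q + 1) + 2 ^ d = d * 2 ^ d + 1 := by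
  induction d with
  | zero => simp
  | succ d ih =>
    rw [sum_range_succ, pow_succ]
    linarith

lemma choose_add_sub_one_le {m n : ℕ} (q : ℕ) (hm : 1 ≤ m) (hmn : m ≤ n) :
    (q + m - 1).choose (m - 1) ≤ (q + n - 1).choose (n - 1) := by
  obtain ⟨m, rfl⟩ := Nat.exists_eq_add_of_le' hm
  obtain ⟨n, rfl⟩ := Nat.exists_eq_add_of_le' (hm.trans hmn)
  simp only [← add_assoc, Nat.add_sub_cancel]
  rw [← Nat.choose_symm_add, ← Nat.choose_symm_add]
  exact Nat.choose_le_choose q (by omega)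

lemma le_choose_two {g : ℕ} (hg : 3 ≤ g) : g ≤ g.choose 2 := by
  rw [Nat.choose_two_right, Nat.le_div_iff_mul_le two_pos]
  exact Nat.mul_le_mul_left g (by omega)

/-- For all integers `g ≥ 3` and `d ≥ 2`,
`1 + ∑_{n=1}^{g} C(g,n) ∑_{q=0}^{d-1} 2^q C(q+n-1, n-1) > 2^d (gd + 1)`. -/
theorem combinatorial_inequality (g d : ℕ) (hg : 3 ≤ g) (hd : 2 ≤ d) :
    2 ^ d * (g * d + 1) <
      1 + ∑ n ∈ Finset.Icc 1 g,
        g.choose n * ∑ q ∈ Finset.range d, 2 ^ q * (q + n - 1).choose (n - 1) := by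
  set S : ℕ → ℕ := fun n => ∑ q ∈ range d, 2 ^ q * (q + n - 1).choose (n - 1)
  change 2 ^ d * (g * d + 1) < 1 + ∑ n ∈ Icc 1 g, g.choose n * S n
  have hS1 : S 1 + 1 = 2 ^ d := by simpa [S] using sum_range_two_pow_add_one d
  have hS2 : S 2 + 2 ^ d = d * 2 ^ d + 1 := by simpa [S] using sum_range_two_pow_mul_succ_add d
  have hS23 : S 2 ≤ S 3 :=
    sum_le_sum fun q _ => Nat.mul_le_mul_left _ (choose_add_sub_one_le q one_le_two (by norm_num))
  have hfirst : g * S 1 + g.choose 2 * S 2 + g.choose 3 * S 3 ≤ ∑ n ∈ Icc 1 g, g.choose n * S n :=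
    calc _ = ∑ n ∈ Icc 1 3, g.choose n * S n := by simp [sum_Icc_succ_top, add_assoc]
      _ ≤ _ := sum_le_sum_of_subset (Icc_subset_Icc_right hg)
  have hchoose2 := Nat.mul_le_mul_right (S 2) (le_choose_two hg)
  have hchoose3 := Nat.mul_le_mul (Nat.choose_pos hg) hS23
  have hpow := Nat.mul_le_mul_right (2 ^ d) hd
  nlinarith
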